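/- arXiv:2604.04367 — 3 statements merged into one kernel-verified Lean document; each statement's English description precedes it below -/
import Mathlib

section
/- Let G be a finite 2-group acting on a set F, let N be a normal subgroup of G with N ≠ G, and let φ : F → R be a G-invariant function into a commutative ring R of characteristic 2. Then the sum of φ(f) over f in F^N \ F^G (the N-fixed points that are not G-fixed) is zero, provided F^N is finite. -/
theorem stmt0_aux {G F R : Type*} [Group G] [Fintype G] [MulAction G F] [CommRing R]
    (hchar : (2 : R) = 0)
    (n : ℕ) (hcard : Fintype.card G = 2 ^ n)
    (φ : F → R) (hφ : ∀ (g : G) (f : F), φ (g • f) = φ f) :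
    ∀ s : Finset F, (∀ (g : G) (f : F), f ∈ s → g • f ∈ s) →
      (∀ f ∈ s, ∃ g : G, g • f ≠ f) → ∑ f ∈ s, φ f = 0 := by
  classical
  intro s
  induction s using Finset.strongInduction with
  | _ s ih =>
    intro hinv hfix
    rcases s.eq_empty_or_nonempty with rfl | ⟨f, hf⟩
    · simp
    · haveI : Finite (MulAction.orbit G f) := (Set.finite_range _).to_subtype
      haveI := Fintype.ofFinite (MulAction.orbit G f)
      set O : Finset F := (MulAction.orbit G f).toFinset with hO
      have hmem : ∀ x, x ∈ O ↔ x ∈ MulAction.orbit G f := by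
        intro x; simp [hO]
      have hOsub : O ⊆ s := by
        intro x hx
        rw [hmem] at hx
        obtain ⟨g, rfl⟩ := hx
        exact hinv g f hf
      have hfO : f ∈ O := (hmem f).2 (MulAction.mem_orbit_self f)
      have hcardO : O.card = Fintype.card (MulAction.orbit G f) := Set.toFinset_card _
      have hdvd : O.card ∣ Fintype.card G := by
        rw [hcardO]
        exact ⟨_, (MulAction.card_orbit_mul_card_stabilizer_eq_card_group G f).symm⟩
      obtain ⟨g0, hg0⟩ := hfix f hf
      have hg0O : g0 • f ∈ O := (hmem _).2 (MulAction.mem_orbit f g0)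
      have hne1 : O.card ≠ 1 := by
        intro h1
        obtain ⟨a, ha⟩ := Finset.card_eq_one.1 h1
        rw [ha, Finset.mem_singleton] at hfO hg0O
        exact hg0 (hg0O.trans hfO.symm)
      have heven : 2 ∣ O.card := by
        rw [hcard] at hdvd
        obtain ⟨k, hk, hkeq⟩ := (Nat.dvd_prime_pow Nat.prime_two).1 hdvd
        cases k with
        | zero => exact absurd (by simpa using hkeq) hne1
        | succ m => rw [hkeq]; exact dvd_pow_self 2 (Nat.succ_ne_zero m)
      have hsumO : ∑ x ∈ O, φ x = 0 := by
        have hconst : ∀ x ∈ O, φ x = φ f := by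
          intro x hx
          rw [hmem] at hx
          obtain ⟨g, rfl⟩ := hx
          exact hφ g f
        rw [Finset.sum_congr rfl hconst, Finset.sum_const, nsmul_eq_mul]
        obtain ⟨m, hm⟩ := heven
        rw [hm]
        push_cast
        rw [hchar, zero_mul, zero_mul]
      have hOstable : ∀ (g : G) (x : F), x ∈ O ↔ g • x ∈ O := by
        intro g x
        rw [hmem, hmem]
        constructor
        · rintro ⟨h, rfl⟩
          exact MulAction.mem_orbit_iff.2 ⟨g * h, (mul_smul g h f)⟩
        · rintro hx
          obtain ⟨h, hh⟩ := MulAction.mem_orbit_iff.1 hx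
          exact MulAction.mem_orbit_iff.2 ⟨g⁻¹ * h, by rw [mul_smul, hh, inv_smul_smul]⟩
      have hrest : ∑ x ∈ s \ O, φ x = 0 := by
        refine ih (s \ O) (Finset.sdiff_ssubset hOsub ⟨f, hfO⟩) ?_ ?_
        · intro g x hx
          rw [Finset.mem_sdiff] at hx ⊢
          exact ⟨hinv g x hx.1, fun h => hx.2 ((hOstable g x).2 h)⟩
        · intro x hx
          exact hfix x (Finset.mem_sdiff.1 hx).1
      calc ∑ x ∈ s, φ x = ∑ x ∈ O, φ x + ∑ x ∈ s \ O, φ x := by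
            rw [← Finset.sum_union Finset.disjoint_sdiff,
              Finset.union_sdiff_of_subset hOsub]
        _ = 0 := by rw [hsumO, hrest, add_zero]

/-- Let `G` be a finite 2-group acting on a set `F`, `N ⊴ G` with `N ≠ G`,
`φ : F → R` a `G`-invariant function into a commutative ring of characteristic 2.
Then the sum of `φ` over `F^N \ F^G` is zero, provided `F^N` is finite. -/
theorem stmt0 {G F R : Type*} [Group G] [Fintype G] [MulAction G F] [CommRing R]
    (hchar : (2 : R) = 0)
    (n : ℕ) (hcard : Fintype.card G = 2 ^ n)
    (N : Subgroup G) [N.Normal] (hN : N ≠ ⊤)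
    (φ : F → R) (hφ : ∀ (g : G) (f : F), φ (g • f) = φ f)
    (hfin : ({f : F | ∀ g ∈ N, g • f = f}).Finite) :
    ∑ f ∈ (hfin.sdiff (t := {f : F | ∀ g : G, g • f = f})).toFinset, φ f = 0 := by
  classical
  have hNormal : N.Normal := inferInstance
  refine stmt0_aux hchar n hcard φ hφ _ ?_ ?_
  · intro g f hf
    rw [Set.Finite.mem_toFinset, Set.mem_diff] at hf ⊢
    obtain ⟨hfN, hfG⟩ := hf
    constructor
    · intro h hh
      have hconj : g⁻¹ * h * g ∈ N := by
        have := hNormal.conj_mem h hh g⁻¹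
        simpa using this
      calc h • g • f = (h * g) • f := (mul_smul h g f).symm
        _ = (g * (g⁻¹ * h * g)) • f := by group
        _ = g • ((g⁻¹ * h * g) • f) := mul_smul _ _ _
        _ = g • f := by rw [hfN _ hconj]
    · intro hall
      apply hfG
      intro g'
      have := hall (g * g' * g⁻¹)
      rw [mul_smul, mul_smul, inv_smul_smul] at this
      exact smul_left_cancel g this
  · intro f hf
    rw [Set.Finite.mem_toFinset, Set.mem_diff] at hf
    obtain ⟨-, hfG⟩ := hf
    simpa using hfG
end

section
/- Let G be a finite 2-group acting on a finite set F, and let φ : F → R be a G-invariant function into a commutative ring R of characteristic 2. If N₁ and N₂ are two subgroups of G such that φ is both N₁-invariant and N₂-invariant in the induced sense, then the sum of φ over F^{N₁} equals the sum of φ over F^{N₂}. -/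
/-!
Decompose `F` into orbits of a subgroup `N`. An `N`-invariant `φ` is constant on each orbit, so an
orbit `O` contributes `|O| • φ`. Orbits of a `2`-group have `2`-power size, so in characteristic `2`
only the one-point orbits, i.e. the `N`-fixed points, contribute. Hence both sums equal `∑ f, φ f`.
-/

open MulAction

section OrbitSums

variable {H α M : Type*} [Group H] [MulAction H α] [AddCommMonoid M]

theorem MulAction.sum_eq_sum_orbitRel_card_orbit_nsmul [Fintype α]
    [Fintype (orbitRel.Quotient H α)] {φ : α → M} (hφ : ∀ (g : H) (x : α), φ (g • x) = φ x) :
    ∑ x, φ x = ∑ ω : orbitRel.Quotient H α, Nat.card (orbit H ω.out) • φ ω.out := by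
  classical
  rw [← (selfEquivSigmaOrbits H α).symm.sum_comp, Fintype.sum_sigma]
  refine Fintype.sum_congr _ _ fun ω => ?_
  have hconst : ∀ y : orbit H ω.out, φ y = φ ω.out := by
    rintro ⟨_, g, rfl⟩
    exact hφ g _
  change ∑ y : orbit H ω.out, φ y = _
  rw [Fintype.sum_congr _ _ hconst, Finset.sum_const, Finset.card_univ, Nat.card_eq_fintype_card]

theorem MulAction.smul_mem_fixedPoints_iff {g : H} {x : α} :
    g • x ∈ fixedPoints H α ↔ x ∈ fixedPoints H α := by
  refine ⟨fun h => ?_, fun h => (h g).symm ▸ h⟩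
  have hx : x = g • x := by simpa using h g⁻¹
  exact hx ▸ h

theorem IsPGroup.card_orbit_nsmul_eq_zero {p : ℕ} [Fact p.Prime] (hH : IsPGroup p H)
    (hM : ∀ m : M, p • m = 0) {x : α} [Finite (orbit H x)] (hx : x ∉ fixedPoints H α) (m : M) :
    Nat.card (orbit H x) • m = 0 := by
  obtain ⟨k, hk⟩ := hH.card_orbit x
  have hk0 : k ≠ 0 := by
    rintro rfl
    rw [pow_zero, Nat.card_eq_one_iff_unique] at hk
    exact hx (subsingleton_orbit_iff_mem_fixedPoints.mp (Set.subsingleton_coe _ |>.mp hk.1))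
  rw [hk, ← Nat.succ_pred_eq_of_ne_zero hk0, pow_succ, mul_nsmul, hM]

theorem IsPGroup.sum_fixedPoints_eq_sum {p : ℕ} [Fact p.Prime] (hH : IsPGroup p H)
    (hM : ∀ m : M, p • m = 0) [Fintype α] {φ : α → M} (hφ : ∀ (g : H) (x : α), φ (g • x) = φ x) :
    ∑ x ∈ (Set.toFinite (fixedPoints H α)).toFinset, φ x = ∑ x, φ x := by
  classical
  -- `φ` and its restriction `ψ` to the fixed points agree on every orbit after weighting by its size
  set ψ := (fixedPoints H α).indicator φ
  have hψ : ∀ (g : H) (x : α), ψ (g • x) = ψ x := fun g x => by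
    simp only [ψ, Set.indicator, smul_mem_fixedPoints_iff, hφ]
  have hsum : ∑ x ∈ (Set.toFinite (fixedPoints H α)).toFinset, φ x = ∑ x, ψ x := by
    rw [Finset.sum_indicator_eq_sum_filter]
    congr 1; ext; simp
  rw [hsum, sum_eq_sum_orbitRel_card_orbit_nsmul hψ, sum_eq_sum_orbitRel_card_orbit_nsmul hφ]
  refine Fintype.sum_congr _ _ fun ω => ?_
  by_cases hfix : ω.out ∈ fixedPoints H α
  · simp [ψ, hfix]
  · rw [hH.card_orbit_nsmul_eq_zero hM hfix, hH.card_orbit_nsmul_eq_zero hM hfix]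

end OrbitSums

/-- For a finite 2-group `G` acting on a finite set `F` and a function
`φ : F → R` into a commutative ring of characteristic 2 that is invariant under two
subgroups `N₁`, `N₂` of `G`, the sum of `φ` over the `N₁`-fixed points equals the sum
of `φ` over the `N₂`-fixed points. -/
theorem stmt1 {G F R : Type*} [Group G] [Fintype G] [MulAction G F] [Fintype F] [CommRing R]
    (hchar : (2 : R) = 0)
    (n : ℕ) (hcard : Fintype.card G = 2 ^ n)
    (N₁ N₂ : Subgroup G)
    (φ : F → R)
    (hφ₁ : ∀ g ∈ N₁, ∀ f : F, φ (g • f) = φ f)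
    (hφ₂ : ∀ g ∈ N₂, ∀ f : F, φ (g • f) = φ f) :
    ∑ f ∈ (Set.toFinite {f : F | ∀ g ∈ N₁, g • f = f}).toFinset, φ f =
      ∑ f ∈ (Set.toFinite {f : F | ∀ g ∈ N₂, g • f = f}).toFinset, φ f := by
  have : Fact (Nat.Prime 2) := ⟨Nat.prime_two⟩
  have hG : IsPGroup 2 G := .of_card (n := n) (by rw [Nat.card_eq_fintype_card, hcard])
  have hR : ∀ r : R, 2 • r = 0 := fun r => by rw [two_nsmul, ← two_mul, hchar, zero_mul]
  have hsum : ∀ N : Subgroup G, (∀ g ∈ N, ∀ f : F, φ (g • f) = φ f) →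
      ∑ f ∈ (Set.toFinite {f : F | ∀ g ∈ N, g • f = f}).toFinset, φ f = ∑ f, φ f := by
    intro N hN
    convert (hG.to_subgroup N).sum_fixedPoints_eq_sum hR (fun g => hN g g.2) using 4
    ext
    simp [mem_fixedPoints, Subgroup.smul_def]
  rw [hsum N₁ hφ₁, hsum N₂ hφ₂]
end

section
/- Let B be a finite set, X a profinite set, and let G be a profinite group acting continuously on X. Then every continuous function f : X → B (B discrete) is constant on the orbits of some open subgroup H ≤ G; that is, the set of continuous functions X → B equals the union over open subgroups H of the functions factoring through H\X. -/
open Topology Filter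

/-- Let `G` be a profinite group acting continuously on a profinite set `X`,
and `B` a finite discrete set. Every continuous `f : X → B` is constant on the orbits of
some open subgroup `H ≤ G`. -/
theorem stmt9 {G X B : Type*} [Group G] [TopologicalSpace G] [IsTopologicalGroup G]
    [CompactSpace G] [T2Space G] [TotallyDisconnectedSpace G]
    [TopologicalSpace X] [CompactSpace X] [T2Space X] [TotallyDisconnectedSpace X]
    [MulAction G X] (hact : Continuous fun p : G × X => p.1 • p.2)
    [Finite B] [TopologicalSpace B] [DiscreteTopology B]
    (f : X → B) (hf : Continuous f) :
    ∃ H : Subgroup G, IsOpen (H : Set G) ∧ ∀ h ∈ H, ∀ x : X, f (h • x) = f x := by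
  classical
  set H : Subgroup G :=
    { carrier := {g : G | ∀ x : X, f (g • x) = f x}
      one_mem' := by intro x; rw [one_smul]
      mul_mem' := by
        intro a b ha hb x
        rw [mul_smul, ha, hb]
      inv_mem' := by
        intro a ha x
        have := ha (a⁻¹ • x)
        rw [smul_inv_smul] at this
        exact this.symm } with hH
  refine ⟨H, ?_, fun h hh x => hh x⟩
  have hW : IsOpen {p : G × X | f (p.1 • p.2) = f p.2} := by
    have hc : Continuous fun p : G × X => (f (p.1 • p.2), f p.2) :=
      (hf.comp hact).prodMk (hf.comp continuous_snd)
    have heq : {p : G × X | f (p.1 • p.2) = f p.2} =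
        (fun p : G × X => (f (p.1 • p.2), f p.2)) ⁻¹' {q : B × B | q.1 = q.2} := rfl
    rw [heq]
    exact (isOpen_discrete _).preimage hc
  rw [isOpen_iff_mem_nhds]
  intro g hg
  have hmem : {p : G × X | f (p.1 • p.2) = f p.2} ∈ (𝓝 g) ×ˢ 𝓝ˢ (Set.univ : Set X) := by
    apply isCompact_univ.mem_prod_nhdsSet_of_forall
    intro x _
    rw [← nhds_prod_eq]
    exact hW.mem_nhds (hg x)
  rw [nhdsSet_univ] at hmem
  rcases Filter.mem_prod_iff.1 hmem with ⟨t, ht, s, hs, hts⟩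
  refine Filter.mem_of_superset ht fun g' hg' => ?_
  intro x
  have hx : x ∈ s := by
    have : s = Set.univ := by simpa using Filter.mem_top.1 hs
    simp [this]
  exact hts (Set.mk_mem_prod hg' hx)
end
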